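/- Let ψ ∈ G_{n,r} be in semi-normal form with respect to an A-basis X, and let u ∈ V_{n,r} satisfy uψ^k = uΔ with Δ ∈ A* nonempty. Then u has a characteristic (m, Γ) with respect to ψ, k = mq, and Δ = Γ^q for some positive integer q. -/

import Mathlib

/-- A Higman `Ω`-algebra in the variety `𝒱_n`: `n` descending (unary) operations
`α₁, …, α_n` and one `n`-ary contraction `λ`, satisfying the laws
`(wα₁, …, wα_n)λ = w` and `(w₁⋯w_nλ)α_i = w_i`. -/
class HigmanAlgebra (n : ℕ) (V : Type) where
  desc : V → Fin n → V
  contr : (Fin n → V) → V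
  contr_desc : ∀ w : V, contr (desc w) = w
  desc_contr : ∀ (f : Fin n → V) (i : Fin n), desc (contr f) i = f i

open HigmanAlgebra

/-- A homomorphism of Higman algebras: a map compatible with the descending
operations and the contraction. -/
def IsHom (n : ℕ) {V W : Type} [HigmanAlgebra n V] [HigmanAlgebra n W] (f : V → W) : Prop :=
  (∀ (v : V) (i : Fin n), f (desc v i) = desc (f v) i) ∧
  (∀ g : Fin n → V, f (contr g) = contr (f ∘ g))

/-- `X` is a basis (free generating set) of `V`: every map from `X` into a Higman
algebra extends uniquely to a homomorphism. -/
def IsBasis (n : ℕ) {V : Type} [HigmanAlgebra n V] (X : Set V) : Prop :=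
  ∀ (W : Type) [HigmanAlgebra n W], ∀ f : X → W,
    ∃! h : V → W, IsHom n h ∧ ∀ x : X, h x = f x

/-- The action of a word `Γ ∈ A*` in the descending operations: `v Γ`. -/
def applyWord {n : ℕ} {V : Type} [HigmanAlgebra n V] (v : V) (Γ : List (Fin n)) : V :=
  Γ.foldl (fun u i => desc u i) v

/-- A simple expansion of `Y` replaces some `y ∈ Y` by `yα₁, …, yα_n`. -/
def SimpleExpansion (n : ℕ) {V : Type} [HigmanAlgebra n V] (Y Z : Set V) : Prop :=
  ∃ y ∈ Y, Z = (Y \ {y}) ∪ Set.range (fun i : Fin n => desc y i)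

/-- An expansion of `Y`: the result of finitely many simple expansions. -/
def Expansion (n : ℕ) {V : Type} [HigmanAlgebra n V] : Set V → Set V → Prop :=
  Relation.ReflTransGen (SimpleExpansion n)

/-- `X⟨A⟩ = { xΓ : x ∈ X, Γ ∈ A* }`. -/
def wordClosure (n : ℕ) {V : Type} [HigmanAlgebra n V] (X : Set V) : Set V :=
  {v | ∃ x ∈ X, ∃ Γ : List (Fin n), v = applyWord x Γ}

/-- `ψ` is in semi-normal form with respect to `X`: no element of `X⟨A⟩` lies in an
incomplete finite `X`-component of a `ψ`-orbit, i.e. there is no `y ∈ X⟨A⟩` whose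
`X`-component is bounded in both directions. -/
def SemiNormal (n : ℕ) {V : Type} [HigmanAlgebra n V] (ψ : Equiv.Perm V) (X : Set V) : Prop :=
  ∀ y ∈ wordClosure n X, ¬ ∃ a b : ℤ, a ≤ 0 ∧ 0 ≤ b ∧
      (∀ i : ℤ, a ≤ i → i ≤ b → (ψ ^ i) y ∈ wordClosure n X) ∧
      (ψ ^ (a - 1)) y ∉ wordClosure n X ∧ (ψ ^ (b + 1)) y ∉ wordClosure n X

/-- `(m, Γ)` is the characteristic of `u` with respect to `ψ`: `u ψ^m = u Γ` with `Γ`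
nonempty, and `u ψ^i ∉ u⟨A⟩` for all `i` with `0 < |i| < |m|`. -/
def IsCharacteristic (n : ℕ) {V : Type} [HigmanAlgebra n V] (ψ : Equiv.Perm V)
    (u : V) (m : ℤ) (Γ : List (Fin n)) : Prop :=
  m ≠ 0 ∧ Γ ≠ [] ∧ (ψ ^ m) u = applyWord u Γ ∧
    ∀ i : ℤ, i ≠ 0 → |i| < |m| → ∀ Δ : List (Fin n), (ψ ^ i) u ≠ applyWord u Δ

section Aux

variable {n : ℕ} {V : Type} [HigmanAlgebra n V]

lemma applyWord_nil (v : V) : applyWord v ([] : List (Fin n)) = v := rfl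

lemma applyWord_cons (v : V) (i : Fin n) (Γ : List (Fin n)) :
    applyWord v (i :: Γ) = applyWord (desc v i) Γ := rfl

lemma applyWord_append (v : V) (Γ Δ : List (Fin n)) :
    applyWord v (Γ ++ Δ) = applyWord (applyWord v Γ) Δ :=
  List.foldl_append

/-- `Γ^t` as a word. -/
def wpow (Γ : List (Fin n)) (t : ℕ) : List (Fin n) := (List.replicate t Γ).flatten

lemma wpow_zero (Γ : List (Fin n)) : wpow Γ 0 = [] := rfl

lemma wpow_succ (Γ : List (Fin n)) (t : ℕ) : wpow Γ (t + 1) = Γ ++ wpow Γ t := by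
  simp [wpow, List.replicate_succ]

lemma wpow_succ' (Γ : List (Fin n)) (t : ℕ) : wpow Γ (t + 1) = wpow Γ t ++ Γ := by
  simp [wpow, List.replicate_succ']

lemma wpow_length (Γ : List (Fin n)) (t : ℕ) : (wpow Γ t).length = t * Γ.length := by
  simp [wpow]

lemma wpow_ne_nil (Γ : List (Fin n)) (hΓ : Γ ≠ []) {t : ℕ} (ht : 0 < t) :
    wpow Γ t ≠ [] := by
  have h1 : 0 < Γ.length := List.length_pos_iff.mpr hΓ
  have : 0 < (wpow Γ t).length := by
    rw [wpow_length]; positivity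
  exact List.ne_nil_of_length_pos this

lemma IsHom.applyWord_comm {W : Type} [HigmanAlgebra n W] {f : V → W} (hf : IsHom n f)
    (v : V) (Γ : List (Fin n)) :
    f (applyWord v Γ) = applyWord (f v) Γ := by
  induction Γ generalizing v with
  | nil => rfl
  | cons i Γ ih => rw [applyWord_cons, applyWord_cons, ih, hf.1]

lemma IsHom.inv {ψ : Equiv.Perm V} (hψ : IsHom n ⇑ψ) : IsHom n ⇑ψ⁻¹ := by
  constructor
  · intro v i
    apply ψ.injective
    rw [hψ.1, Equiv.Perm.eq_inv_iff_eq.mp rfl, Equiv.Perm.eq_inv_iff_eq.mp rfl]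
  · intro g
    apply ψ.injective
    rw [hψ.2, Equiv.Perm.eq_inv_iff_eq.mp rfl]
    congr 1
    funext i
    simp [Function.comp, Equiv.apply_symm_apply]

lemma IsHom.npow {ψ : Equiv.Perm V} (hψ : IsHom n ⇑ψ) (m : ℕ) : IsHom n ⇑(ψ ^ m) := by
  induction m with
  | zero =>
    simp only [pow_zero]
    exact ⟨fun v i => rfl, fun g => rfl⟩
  | succ m ih =>
    rw [pow_succ]
    constructor
    · intro v i
      simp only [Equiv.Perm.mul_apply]
      rw [hψ.1, ih.1]
    · intro g
      simp only [Equiv.Perm.mul_apply]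
      rw [hψ.2, ih.2]
      rfl

lemma IsHom.zpow {ψ : Equiv.Perm V} (hψ : IsHom n ⇑ψ) (i : ℤ) : IsHom n ⇑(ψ ^ i) := by
  cases i with
  | ofNat m => rw [Int.ofNat_eq_coe, zpow_natCast]; exact hψ.npow m
  | negSucc m =>
    rw [zpow_negSucc]
    exact (hψ.npow (m + 1)).inv

lemma zpow_applyWord {ψ : Equiv.Perm V} (hψ : IsHom n ⇑ψ) (i : ℤ) (v : V) (Γ : List (Fin n)) :
    (ψ ^ i) (applyWord v Γ) = applyWord ((ψ ^ i) v) Γ :=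
  (hψ.zpow i).applyWord_comm v Γ

end Aux
section Model

variable {n : ℕ}

/-- Prepend a letter to a stream. -/
def scons (i : Fin n) (s : ℕ → Fin n) : ℕ → Fin n :=
  fun t => match t with
  | 0 => i
  | t + 1 => s t

/-- Prepend a word to a stream. -/
def wapp (Γ : List (Fin n)) (s : ℕ → Fin n) : ℕ → Fin n := Γ.foldr scons s

lemma wapp_nil (s : ℕ → Fin n) : wapp ([] : List (Fin n)) s = s := rfl

lemma wapp_cons (i : Fin n) (Γ : List (Fin n)) (s : ℕ → Fin n) :
    wapp (i :: Γ) s = scons i (wapp Γ s) := rfl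

/-- The stream model: functions from streams to `S` form a Higman algebra. -/
def modelAlg (S : Type) : HigmanAlgebra n ((ℕ → Fin n) → S) where
  desc w i := fun s => w (scons i s)
  contr f := fun s => f (s 0) (fun t => s (t + 1))
  contr_desc w := by
    funext s
    have : scons (s 0) (fun t => s (t + 1)) = s := by
      funext t; cases t <;> rfl
    show w (scons (s 0) (fun t => s (t + 1))) = w s
    rw [this]
  desc_contr f i := by funext s; rfl

attribute [local instance] modelAlg

lemma modelAlg_applyWord {S : Type} (w : (ℕ → Fin n) → S) (Γ : List (Fin n)) :
    applyWord w Γ = fun s => w (wapp Γ s) := by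
  induction Γ generalizing w with
  | nil => rfl
  | cons i Γ ih =>
    rw [applyWord_cons, ih]
    rfl

lemma wapp_injective (hn : 2 ≤ n) {Γ Δ : List (Fin n)}
    (h : ∀ s, wapp Γ s = wapp Δ s) : Γ = Δ := by
  induction Γ generalizing Δ with
  | nil =>
    cases Δ with
    | nil => rfl
    | cons d Δ' =>
      exfalso
      set d' : Fin n := if d = ⟨0, by omega⟩ then ⟨1, by omega⟩ else ⟨0, by omega⟩ with hd'
      have hne : d' ≠ d := by
        rcases eq_or_ne d ⟨0, by omega⟩ with h0 | h0
        · rw [hd', if_pos h0, h0]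
          intro hc
          exact absurd (Fin.val_eq_val _ _ |>.mpr hc) (by simp)
        · rw [hd', if_neg h0]
          intro hc
          exact h0 hc.symm
      have := congrFun (h (fun _ => d')) 0
      rw [wapp_nil, wapp_cons] at this
      exact hne this
  | cons g Γ' ih =>
    cases Δ with
    | nil =>
      exfalso
      set d' : Fin n := if g = ⟨0, by omega⟩ then ⟨1, by omega⟩ else ⟨0, by omega⟩ with hd'
      have hne : d' ≠ g := by
        rcases eq_or_ne g ⟨0, by omega⟩ with h0 | h0
        · rw [hd', if_pos h0, h0]
          intro hc
          exact absurd (Fin.val_eq_val _ _ |>.mpr hc) (by simp)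
        · rw [hd', if_neg h0]
          intro hc
          exact h0 hc.symm
      have := congrFun (h (fun _ => d')) 0
      rw [wapp_nil, wapp_cons] at this
      exact hne this.symm
    | cons d Δ' =>
      have h0 : g = d := by
        have := congrFun (h (fun _ => g)) 0
        rw [wapp_cons, wapp_cons] at this
        exact this
      have htail : ∀ s, wapp Γ' s = wapp Δ' s := by
        intro s
        funext t
        have := congrFun (h s) (t + 1)
        rw [wapp_cons, wapp_cons] at this
        exact this
      rw [h0, ih htail]

end Model
section Free

variable {n : ℕ} {V : Type} [HigmanAlgebra n V]

lemma basis_free (hn : 2 ≤ n) {X₀ : Set V} (hX₀ : IsBasis n X₀)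
    {x y : V} (hx : x ∈ X₀) (hy : y ∈ X₀) {Γ Δ : List (Fin n)}
    (h : applyWord x Γ = applyWord y Δ) : x = y ∧ Γ = Δ := by
  classical
  letI : HigmanAlgebra n ((ℕ → Fin n) → (X₀ × (ℕ → Fin n))) := modelAlg _
  obtain ⟨hh, ⟨hhom, hval⟩, -⟩ :=
    hX₀ ((ℕ → Fin n) → (X₀ × (ℕ → Fin n))) (fun x => fun s => (x, s))
  have key : ∀ (z : V) (hz : z ∈ X₀) (Θ : List (Fin n)),
      hh (applyWord z Θ) = fun s => ((⟨z, hz⟩ : X₀), wapp Θ s) := by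
    intro z hz Θ
    have h1 : hh (applyWord z Θ) = applyWord (hh z) Θ := hhom.applyWord_comm z Θ
    rw [h1, hval ⟨z, hz⟩, modelAlg_applyWord]
  have h2 := congrArg hh h
  rw [key x hx Γ, key y hy Δ] at h2
  have h3 : ∀ s : ℕ → Fin n, ((⟨x, hx⟩ : X₀), wapp Γ s) = ((⟨y, hy⟩ : X₀), wapp Δ s) :=
    fun s => congrFun h2 s
  constructor
  · have := (Prod.ext_iff.mp (h3 (fun _ => ⟨0, by omega⟩))).1
    exact congrArg Subtype.val this
  · exact wapp_injective hn (fun s => (Prod.ext_iff.mp (h3 s)).2)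

def subAlg (P : V → Prop)
    (hdesc : ∀ v, P v → ∀ i : Fin n, P (desc v i))
    (hcontr : ∀ f : Fin n → V, (∀ i, P (f i)) → P (contr f)) :
    HigmanAlgebra n {v : V // P v} where
  desc v i := ⟨desc v.1 i, hdesc v.1 v.2 i⟩
  contr f := ⟨contr (fun i => (f i).1), hcontr _ (fun i => (f i).2)⟩
  contr_desc w := Subtype.ext (by simp [contr_desc])
  desc_contr f i := Subtype.ext (by simp [desc_contr])

lemma basis_induction {X₀ : Set V} (hX₀ : IsBasis n X₀) (P : V → Prop)
    (h0 : ∀ x ∈ X₀, P x)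
    (hdesc : ∀ v, P v → ∀ i : Fin n, P (desc v i))
    (hcontr : ∀ f : Fin n → V, (∀ i, P (f i)) → P (contr f)) :
    ∀ v, P v := by
  letI : HigmanAlgebra n {v : V // P v} := subAlg P hdesc hcontr
  obtain ⟨hh, ⟨hhom, hval⟩, -⟩ := hX₀ {v : V // P v} (fun x => ⟨x.1, h0 _ x.2⟩)
  obtain ⟨hid, -, huniq⟩ := hX₀ V (fun x => (x : V))
  have hVhom : IsHom n (fun v : V => (hh v).1) := by
    constructor
    · intro v i
      show (hh (desc v i)).1 = desc (hh v).1 i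
      rw [hhom.1 v i]
      rfl
    · intro g
      show (hh (contr g)).1 = _
      rw [hhom.2 g]
      rfl
  have h1 : (fun v : V => (hh v).1) = hid :=
    huniq _ ⟨hVhom, fun x => by show (hh x).1 = _; rw [hval x]⟩
  have h2 : (id : V → V) = hid :=
    huniq _ ⟨⟨fun v i => rfl, fun g => rfl⟩, fun x => rfl⟩
  intro v
  have : (hh v).1 = v := congrFun (h1.trans h2.symm) v
  exact this ▸ (hh v).2

lemma mem_wordClosure {X₀ : Set V} {x : V} (hx : x ∈ X₀) (Γ : List (Fin n)) :
    applyWord x Γ ∈ wordClosure n X₀ :=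
  ⟨x, hx, Γ, rfl⟩

lemma depth_exists {X₀ : Set V} (hX₀ : IsBasis n X₀) (u : V) :
    ∃ d : ℕ, ∀ Ε : List (Fin n), d ≤ Ε.length → applyWord u Ε ∈ wordClosure n X₀ := by
  classical
  refine basis_induction hX₀
    (fun v => ∃ d : ℕ, ∀ Ε : List (Fin n), d ≤ Ε.length → applyWord v Ε ∈ wordClosure n X₀)
    ?_ ?_ ?_ u
  · intro x hx
    exact ⟨0, fun Ε _ => mem_wordClosure hx Ε⟩
  · rintro v ⟨d, hd⟩ i
    refine ⟨d, fun Ε hΕ => ?_⟩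
    rw [← applyWord_cons]
    exact hd (i :: Ε) (by simp; omega)
  · intro f hf
    choose d hd using hf
    refine ⟨(Finset.univ.sup d) + 1, fun Ε hΕ => ?_⟩
    cases Ε with
    | nil => simp at hΕ
    | cons i Ε' =>
      rw [applyWord_cons, desc_contr]
      refine hd i Ε' ?_
      have h1 : d i ≤ Finset.univ.sup d := Finset.le_sup (Finset.mem_univ i)
      rw [List.length_cons] at hΕ
      omega

end Free
section Orbit

variable {n : ℕ} {V : Type} [HigmanAlgebra n V]

lemma wpow_add (Γ : List (Fin n)) (a b : ℕ) :
    wpow Γ (a + b) = wpow Γ a ++ wpow Γ b := by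
  unfold wpow
  rw [List.replicate_add, List.flatten_append]

lemma self_word (hn : 2 ≤ n) {X₀ : Set V} (hX₀ : IsBasis n X₀)
    {v : V} {Λ : List (Fin n)} (hΛ : Λ ≠ []) (h : v = applyWord v Λ) : False := by
  have hpow : ∀ t : ℕ, v = applyWord v (wpow Λ t) := by
    intro t
    induction t with
    | zero => rfl
    | succ t ih =>
      rw [wpow_succ, applyWord_append, ← h]
      exact ih
  obtain ⟨d, hd⟩ := depth_exists hX₀ v
  have hlen : d ≤ (wpow Λ (d + 1)).length := by
    rw [wpow_length]
    have : 1 ≤ Λ.length := List.length_pos_iff.mpr hΛ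
    calc d ≤ (d + 1) * 1 := by omega
    _ ≤ (d + 1) * Λ.length := Nat.mul_le_mul_left _ this
  have hv : v ∈ wordClosure n X₀ := by
    rw [hpow (d + 1)]
    exact hd _ hlen
  obtain ⟨x, hx, Θ, hΘ⟩ := hv
  have heq : applyWord x Θ = applyWord x (Θ ++ wpow Λ (d + 1)) := by
    rw [applyWord_append, ← hΘ, ← hpow (d + 1)]
  have := (basis_free hn hX₀ hx hx heq).2
  have hlen2 := congrArg List.length this
  rw [List.length_append, wpow_length] at hlen2
  have h1 : 1 ≤ Λ.length := List.length_pos_iff.mpr hΛ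
  have hpos : 0 < (d + 1) * Λ.length := Nat.mul_pos (by omega) h1
  omega

lemma rel_mul {ψ : Equiv.Perm V} (hψ : IsHom n ⇑ψ) {u : V} {i : ℤ} {Λ : List (Fin n)}
    (h : (ψ ^ i) u = applyWord u Λ) (t : ℕ) :
    (ψ ^ (i * t)) u = applyWord u (wpow Λ t) := by
  induction t with
  | zero => simp [wpow_zero, applyWord_nil]
  | succ t ih =>
    have he : i * ((t : ℤ) + 1) = i + i * t := by ring
    push_cast
    rw [he, zpow_add, Equiv.Perm.mul_apply]
    push_cast at ih
    rw [ih, zpow_applyWord hψ, h, ← applyWord_append, ← wpow_succ]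

lemma fixed_zpow {σ : Equiv.Perm V} {v : V} (h : σ v = v) (j : ℤ) : (σ ^ j) v = v := by
  have hn : ∀ m : ℕ, (σ ^ m) v = v := by
    intro m
    induction m with
    | zero => rfl
    | succ m ih => rw [pow_succ, Equiv.Perm.mul_apply, h, ih]
  cases j with
  | ofNat m => rw [Int.ofNat_eq_coe, zpow_natCast]; exact hn m
  | negSucc m =>
    rw [zpow_negSucc]
    have := hn (m + 1)
    conv_lhs => rw [← this]
    exact Equiv.symm_apply_apply _ v

end Orbit
section Main

variable {n : ℕ} {V : Type} [HigmanAlgebra n V]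
variable {X₀ : Set V} {ψ : Equiv.Perm V} {u : V} {k : ℤ} {Δ : List (Fin n)}

lemma no_period (hn : 2 ≤ n) (hX₀ : IsBasis n X₀) (hψ : IsHom n ⇑ψ)
    (hΔ : Δ ≠ []) (hkpos : 0 < k) (hk : (ψ ^ k) u = applyWord u Δ)
    {i : ℤ} (hi0 : i ≠ 0) (hfix : (ψ ^ i) u = u) : False := by
  have hiipos : 0 < i * i := mul_self_pos.mpr hi0
  set t : ℕ := (i * i * k).toNat with ht
  have htZ : (t : ℤ) = i * i * k := Int.toNat_of_nonneg (by positivity)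
  have htpos : 0 < t := by
    have : (0 : ℤ) < i * i * k := by positivity
    omega
  have h1 := rel_mul hψ hk t
  have h2 : (ψ ^ (k * t)) u = u := by
    have he : k * (t : ℤ) = i * (i * k * k) := by rw [htZ]; ring
    rw [he, zpow_mul]
    exact fixed_zpow hfix _
  rw [h2] at h1
  exact self_word hn hX₀ (wpow_ne_nil Δ hΔ htpos) h1

lemma no_mixed (hn : 2 ≤ n) (hX₀ : IsBasis n X₀) (hψ : IsHom n ⇑ψ)
    (hΔ : Δ ≠ []) (hkpos : 0 < k) (hk : (ψ ^ k) u = applyWord u Δ)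
    {i : ℤ} (hineg : i < 0) {Λ : List (Fin n)}
    (hrel : (ψ ^ i) u = applyWord u Λ) : False := by
  set t1 : ℕ := k.toNat with ht1
  set t2 : ℕ := (-i).toNat with ht2
  have ht1Z : (t1 : ℤ) = k := Int.toNat_of_nonneg (by omega)
  have ht2Z : (t2 : ℤ) = -i := Int.toNat_of_nonneg (by omega)
  have ht2pos : 0 < t2 := by omega
  have h1 := rel_mul hψ hrel t1
  have h2 := rel_mul hψ hk t2
  have h3 : (ψ ^ (k * t2)) ((ψ ^ (i * t1)) u) = u := by
    rw [← Equiv.Perm.mul_apply, ← zpow_add]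
    have he : k * (t2 : ℤ) + i * t1 = 0 := by rw [ht1Z, ht2Z]; ring
    rw [he]
    rfl
  rw [h1, zpow_applyWord hψ, h2, ← applyWord_append] at h3
  exact self_word hn hX₀
    (by simp [wpow_ne_nil Δ hΔ ht2pos]) h3.symm

lemma step_sub (hn : 2 ≤ n) (hX₀ : IsBasis n X₀) (hψ : IsHom n ⇑ψ)
    {i j : ℤ} (hipos : 0 < i) (hij : i < j) {Λ Μ : List (Fin n)}
    (hΛ : Λ ≠ []) (hΜ : Μ ≠ [])
    (hri : (ψ ^ i) u = applyWord u Λ) (hrj : (ψ ^ j) u = applyWord u Μ) :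
    ∃ Ε : List (Fin n), Ε ≠ [] ∧ (ψ ^ (j - i)) u = applyWord u Ε := by
  set i' : ℕ := i.toNat with hi'
  set j' : ℕ := j.toNat with hj'
  have hi'Z : (i' : ℤ) = i := Int.toNat_of_nonneg (by omega)
  have hj'Z : (j' : ℤ) = j := Int.toNat_of_nonneg (by omega)
  have hi'pos : 0 < i' := by omega
  have hij' : i' < j' := by omega
  -- the word equation uΛ^{j't} = uΜ^{i't}
  have word_eq : ∀ t : ℕ, applyWord u (wpow Λ (j' * t)) = applyWord u (wpow Μ (i' * t)) := by
    intro t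
    have h1 := rel_mul hψ hri (j' * t)
    have h2 := rel_mul hψ hrj (i' * t)
    have he : i * ((j' * t : ℕ) : ℤ) = j * ((i' * t : ℕ) : ℤ) := by
      push_cast
      rw [hi'Z, hj'Z]
      ring
    rw [← h1, ← h2, he]
  obtain ⟨d, hd⟩ := depth_exists hX₀ u
  have hΛlen : 1 ≤ Λ.length := List.length_pos_iff.mpr hΛ
  have hΜlen : 1 ≤ Μ.length := List.length_pos_iff.mpr hΜ
  have hdeep : d ≤ (wpow Λ (j' * (d + 1))).length := by
    rw [wpow_length]
    calc d ≤ 1 * (d + 1) * 1 := by omega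
    _ ≤ j' * (d + 1) * Λ.length := by
      apply Nat.mul_le_mul _ hΛlen
      apply Nat.mul_le_mul _ (le_refl _)
      omega
  obtain ⟨x, hx, Θ, hΘ⟩ := hd _ hdeep
  have eq1 : applyWord u (wpow Λ (j' * (d + 1))) = applyWord u (wpow Μ (i' * (d + 1))) :=
    word_eq (d + 1)
  have eq2 : applyWord x (Θ ++ wpow Λ j') = applyWord x (Θ ++ wpow Μ i') := by
    rw [applyWord_append, applyWord_append, ← hΘ]
    conv_rhs => rw [eq1]
    rw [← applyWord_append, ← applyWord_append, ← wpow_add, ← wpow_add]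
    have ha : j' * (d + 1) + j' = j' * (d + 2) := by ring
    have hb : i' * (d + 1) + i' = i' * (d + 2) := by ring
    rw [ha, hb]
    exact word_eq (d + 2)
  have hW : wpow Λ j' = wpow Μ i' :=
    List.append_cancel_left (basis_free hn hX₀ hx hx eq2).2
  have hWlen : j' * Λ.length = i' * Μ.length := by
    have := congrArg List.length hW
    rwa [wpow_length, wpow_length] at this
  have hlenlt : Λ.length < Μ.length := by
    by_contra hcon
    push_neg at hcon
    have h2 : i' * Μ.length < j' * Μ.length :=
      (Nat.mul_lt_mul_right (by omega : 0 < Μ.length)).mpr hij'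
    have h3 : j' * Μ.length ≤ j' * Λ.length := Nat.mul_le_mul (le_refl j') hcon
    omega
  have hpΛ : Λ <+: wpow Μ i' := by
    rw [← hW]
    refine ⟨wpow Λ (j' - 1), ?_⟩
    rw [← wpow_succ]
    congr 1
    omega
  have hpΜ : Μ <+: wpow Μ i' := by
    refine ⟨wpow Μ (i' - 1), ?_⟩
    rw [← wpow_succ]
    congr 1
    omega
  have hΛΜ : Λ <+: Μ := List.prefix_of_prefix_length_le hpΛ hpΜ (le_of_lt hlenlt)
  obtain ⟨Ε, hΕ⟩ := hΛΜ
  have hΕne : Ε ≠ [] := by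
    intro hc
    rw [hc, List.append_nil] at hΕ
    rw [hΕ] at hlenlt
    omega
  set w : V := (ψ ^ (-i)) u with hw
  have hwu : applyWord w Λ = u := by
    apply (ψ ^ i).injective
    rw [zpow_applyWord hψ]
    have hwi : (ψ ^ i) w = u := by
      rw [hw, ← Equiv.Perm.mul_apply, ← zpow_add]
      have : i + -i = 0 := by ring
      rw [this]
      rfl
    rw [hwi, hri]
  refine ⟨Ε, hΕne, ?_⟩
  have hsplit : (ψ ^ (j - i)) u = (ψ ^ (-i)) ((ψ ^ j) u) := by
    rw [← Equiv.Perm.mul_apply, ← zpow_add]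
    congr 1
    ring
  rw [hsplit, hrj, zpow_applyWord hψ, ← hw, ← hΕ, ← hwu, ← applyWord_append]

end Main
section MainPos

variable {n : ℕ} {V : Type} [HigmanAlgebra n V]
variable {X₀ : Set V} {ψ : Equiv.Perm V} {u : V} {k : ℤ} {Δ : List (Fin n)}

lemma main_pos (hn : 2 ≤ n) (hX₀ : IsBasis n X₀) (hψ : IsHom n ⇑ψ)
    (hΔ : Δ ≠ []) (hkpos : 0 < k) (hk : (ψ ^ k) u = applyWord u Δ) :
    ∃ (m : ℤ) (Γ : List (Fin n)) (q : ℕ), 0 < q ∧ 0 < m ∧ IsCharacteristic n ψ u m Γ ∧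
      k = m * q ∧ Δ = wpow Γ q := by
  classical
  have hex : ∃ t : ℕ, 0 < t ∧ ∃ Λ : List (Fin n), Λ ≠ [] ∧
      (ψ ^ (t : ℤ)) u = applyWord u Λ := by
    refine ⟨k.toNat, by omega, Δ, hΔ, ?_⟩
    rw [Int.toNat_of_nonneg (by omega : (0:ℤ) ≤ k)]
    exact hk
  set m := Nat.find hex with hmdef
  obtain ⟨hmpos, Γ, hΓne, hΓrel⟩ := Nat.find_spec hex
  have hmin : ∀ t, t < m → ¬ (0 < t ∧ ∃ Λ : List (Fin n), Λ ≠ [] ∧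
      (ψ ^ (t : ℤ)) u = applyWord u Λ) := fun t ht => Nat.find_min hex ht
  have hdvd : ∀ t : ℕ, (0 < t ∧ ∃ Λ : List (Fin n), Λ ≠ [] ∧
      (ψ ^ (t : ℤ)) u = applyWord u Λ) → m ∣ t := by
    intro t
    induction t using Nat.strong_induction_on with
    | _ t ih =>
      intro hPt
      rcases lt_trichotomy t m with h | h | h
      · exact absurd hPt (hmin t h)
      · exact h ▸ dvd_refl m
      · obtain ⟨hpos, Μ, hΜne, hΜrel⟩ := hPt
        obtain ⟨Ε, hΕne, hΕrel⟩ := step_sub hn hX₀ hψ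
          (by exact_mod_cast hmpos : (0:ℤ) < (m:ℤ)) (by exact_mod_cast h)
          hΓne hΜne hΓrel hΜrel
        have hcast : ((t : ℤ)) - (m:ℤ) = ((t - m : ℕ) : ℤ) := by
          have : m ≤ t := le_of_lt h
          push_cast [this]
          ring
        have hPtm : 0 < t - m ∧ ∃ Λ : List (Fin n), Λ ≠ [] ∧
            (ψ ^ ((t - m : ℕ) : ℤ)) u = applyWord u Λ :=
          ⟨by omega, Ε, hΕne, by rw [← hcast]; exact hΕrel⟩
        have hdd := ih (t - m) (by omega) hPtm
        have ht' : t = (t - m) + m := by omega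
        rw [ht']
        exact Nat.dvd_add hdd (dvd_refl m)
  have hktpos : 0 < k.toNat := by omega
  obtain ⟨q, hq⟩ := hdvd k.toNat ⟨hktpos, Δ, hΔ, by
    rw [Int.toNat_of_nonneg (by omega : (0:ℤ) ≤ k)]; exact hk⟩
  have hqpos : 0 < q := by
    rcases Nat.eq_zero_or_pos q with h | h
    · rw [h, Nat.mul_zero] at hq; omega
    · exact h
  have hkmq : k = (m : ℤ) * q := by
    have : (k.toNat : ℤ) = k := Int.toNat_of_nonneg (by omega)
    rw [← this, hq]
    push_cast
    ring
  -- the word equation Δ = Γ^q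
  obtain ⟨d, hd⟩ := depth_exists hX₀ u
  have word_eq : ∀ t : ℕ, applyWord u (wpow Δ t) = applyWord u (wpow Γ (q * t)) := by
    intro t
    have h1 := rel_mul hψ hk t
    have h2 := rel_mul hψ hΓrel (q * t)
    have he : k * (t : ℤ) = (m : ℤ) * ((q * t : ℕ) : ℤ) := by
      push_cast
      rw [hkmq]
      ring
    rw [← h1, ← h2, he]
  have hΔlen : 1 ≤ Δ.length := List.length_pos_iff.mpr hΔ
  have hdeep : d ≤ (wpow Δ (d + 1)).length := by
    rw [wpow_length]
    calc d ≤ (d + 1) * 1 := by omega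
    _ ≤ (d + 1) * Δ.length := Nat.mul_le_mul_left _ hΔlen
  obtain ⟨x, hx, Θ, hΘ⟩ := hd _ hdeep
  have eq2 : applyWord x (Θ ++ Δ) = applyWord x (Θ ++ wpow Γ q) := by
    rw [applyWord_append, applyWord_append, ← hΘ]
    conv_rhs => rw [word_eq (d + 1)]
    rw [← applyWord_append, ← applyWord_append, ← wpow_succ', ← wpow_add]
    have hb : q * (d + 1) + q = q * (d + 2) := by ring
    rw [hb]
    exact word_eq (d + 2)
  have hΔΓ : Δ = wpow Γ q :=
    List.append_cancel_left (basis_free hn hX₀ hx hx eq2).2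
  refine ⟨(m : ℤ), Γ, q, hqpos, by exact_mod_cast hmpos, ⟨?_, hΓne, hΓrel, ?_⟩, hkmq, hΔΓ⟩
  · exact_mod_cast (show m ≠ 0 by omega)
  · intro i hi0 hab Δ' heq
    rw [abs_of_nonneg (by positivity : (0:ℤ) ≤ ((m:ℕ) : ℤ))] at hab
    rcases eq_or_ne Δ' [] with hD | hD
    · rw [hD, applyWord_nil] at heq
      exact no_period hn hX₀ hψ hΔ hkpos hk hi0 heq
    · rcases lt_trichotomy i 0 with hneg | h0 | hposi
      · exact no_mixed hn hX₀ hψ hΔ hkpos hk hneg heq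
      · exact absurd h0 hi0
      · rw [abs_of_pos hposi] at hab
        refine hmin i.toNat (by omega) ⟨by omega, Δ', hD, ?_⟩
        rw [Int.toNat_of_nonneg (by omega : (0:ℤ) ≤ i)]
        exact heq

end MainPos
/-- Let `ψ ∈ G_{n,r}` be in semi-normal form with respect to an `A`-basis `X`, and let
`u ∈ V_{n,r}` satisfy `uψ^k = uΔ` with `Δ ∈ A*` nonempty.  Then `u` has a characteristic
`(m, Γ)` with respect to `ψ`, and `k = mq`, `Δ = Γ^q` for some positive integer `q`. -/
theorem stmt11 (n r : ℕ) (hn : 2 ≤ n) {V : Type} [HigmanAlgebra n V]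
    (X₀ : Set V) (hX₀ : IsBasis n X₀) (hX₀fin : X₀.Finite) (hX₀card : X₀.ncard = r)
    (hr : 1 ≤ r)
    (ψ : Equiv.Perm V) (hψ : IsHom n ⇑ψ)
    (X : Set V) (hX : Expansion n X₀ X) (hsnf : SemiNormal n ψ X)
    (u : V) (k : ℤ) (Δ : List (Fin n)) (hΔ : Δ ≠ [])
    (hk : (ψ ^ k) u = applyWord u Δ) :
    ∃ (m : ℤ) (Γ : List (Fin n)) (q : ℕ), 0 < q ∧ IsCharacteristic n ψ u m Γ ∧
      k = m * q ∧ Δ = (List.replicate q Γ).flatten := by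
  rcases lt_trichotomy k 0 with hneg | h0 | hpos
  · -- reduce to the positive case via ψ⁻¹
    have hψinv : IsHom n ⇑ψ⁻¹ := hψ.inv
    have hpow : (ψ⁻¹) ^ (-k) = ψ ^ k := by
      rw [inv_zpow, zpow_neg, inv_inv]
    have hk' : ((ψ⁻¹) ^ (-k)) u = applyWord u Δ := by rw [hpow]; exact hk
    obtain ⟨m, Γ, q, hq, hm, hchar, hkm, hΔΓ⟩ :=
      main_pos hn hX₀ hψinv hΔ (by omega : 0 < -k) hk'
    obtain ⟨hm0, hΓne, hrel, hminc⟩ := hchar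
    refine ⟨-m, Γ, q, hq, ⟨neg_ne_zero.mpr hm0, hΓne, ?_, ?_⟩, ?_, hΔΓ⟩
    · have hpow2 : ψ ^ (-m) = (ψ⁻¹) ^ m := by rw [inv_zpow, zpow_neg]
      rw [hpow2]
      exact hrel
    · intro i hi0 hab Δ'' heq
      refine hminc (-i) (neg_ne_zero.mpr hi0) ?_ Δ'' ?_
      · rw [abs_neg]
        rw [abs_neg] at hab
        exact hab
      · have hpow3 : (ψ⁻¹) ^ (-i) = ψ ^ i := by rw [inv_zpow, zpow_neg, inv_inv]
        rw [hpow3]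
        exact heq
    · rw [neg_mul, ← hkm, neg_neg]
  · exfalso
    rw [h0, zpow_zero] at hk
    exact self_word hn hX₀ hΔ hk
  · obtain ⟨m, Γ, q, hq, hm, hchar, hkm, hΔΓ⟩ := main_pos hn hX₀ hψ hΔ hpos hk
    exact ⟨m, Γ, q, hq, hchar, hkm, hΔΓ⟩
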